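/- Let R = 𝔬/𝔭^ℓ, 0 ≤ r ≤ ℓ-1, I_r = q^r(q-1), and φ_r^{(1)} = (1/√I_r) Σ_{χ ∈ R̂_r} χ. Then the inner product ⟨φ_r^{(1)}(π^r + ·), φ_r^{(1)}⟩ = (1/|R|) Σ_{a∈R} φ_r^{(1)}(π^r + a) conj(φ_r^{(1)}(a)) equals −1/(q-1). -/

import Mathlib

open scoped BigOperators
open ComplexConjugate

/-- The image in `R = 𝔬/𝔭^ℓ` of the ideal `𝔭^r`. -/
def idealImage (O : Type) [CommRing O] (π : O) (ℓ r : ℕ) :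
    Ideal (O ⧸ (Ideal.span {π} ^ ℓ)) :=
  Ideal.map (Ideal.Quotient.mk (Ideal.span {π} ^ ℓ)) (Ideal.span {π} ^ r)

/-- The set of characters `χ` of `R = 𝔬/𝔭^ℓ` with dual valuation `v̂(χ) = r`. -/
def dualLevel (O : Type) [CommRing O] (π : O) (ℓ r : ℕ) :
    Set (AddChar (O ⧸ (Ideal.span {π} ^ ℓ)) ℂ) :=
  {χ | (∀ a ∈ idealImage O π ℓ (r + 1), χ a = 1) ∧ ∃ a ∈ idealImage O π ℓ r, χ a ≠ 1}

/-- The normalized function `φ_r^{(1)} = (1/√I_r) Σ_{χ∈R̂_r} χ`, `I_r = q^r(q-1)`. -/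
noncomputable def phiOne (O : Type) [CommRing O] (π : O) (q ℓ r : ℕ)
    (a : O ⧸ (Ideal.span {π} ^ ℓ)) : ℂ :=
  (1 / (Real.sqrt ((q : ℝ) ^ r * ((q : ℝ) - 1)) : ℂ)) * ∑ᶠ χ ∈ dualLevel O π ℓ r, χ a

/-!
Orthogonality of characters turns the correlation of `Σ_{χ ∈ D} χ` with its translate by `x`
into `|R| · Σ_{χ ∈ D} χ(x)`. The characters of level `r` are those trivial on `𝔭^{r+1}R` minus
those trivial on `𝔭^r R`, i.e. the characters of `R/𝔭^{r+1}` minus those of `R/𝔭^r`. At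
`x = π^r` the first sum vanishes since `π^r ∉ 𝔭^{r+1}`, and the second is `|R/𝔭^r| = q^r`,
so the inner product is `-q^r / I_r = -1/(q-1)`.
-/

namespace AddChar
variable {G : Type*} [AddCommGroup G]

lemma sum_apply_add_mul_conj [Fintype G] [DecidableEq (AddChar G ℂ)] (χ ψ : AddChar G ℂ)
    (x : G) :
    ∑ a, χ (x + a) * conj (ψ a) = if χ = ψ then Fintype.card G * χ x else 0 := by
  have hshift (a : G) : χ (x + a) * conj (ψ a) = χ x * (χ * ψ⁻¹) a := by
    rw [map_add_eq_mul, mul_apply, inv_apply', inv_apply_eq_conj, mul_assoc]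
  simp_rw [hshift, ← Finset.mul_sum, sum_eq_ite, ← one_eq_zero, mul_inv_eq_one]
  split_ifs <;> ring

lemma sum_finsum_mem_apply_add_mul_conj [Fintype G] (D : Set (AddChar G ℂ)) (x : G) :
    ∑ a, (∑ᶠ χ ∈ D, χ (x + a)) * conj (∑ᶠ ψ ∈ D, ψ a) = Fintype.card G * ∑ᶠ χ ∈ D, χ x := by
  classical
  have hD : D.Finite := Set.toFinite D
  simp_rw [finsum_mem_eq_finite_toFinset_sum _ hD, map_sum, Finset.sum_mul_sum,
    Finset.sum_comm (γ := G), sum_apply_add_mul_conj, Finset.sum_ite_eq, Finset.mul_sum]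
  exact Finset.sum_congr rfl fun χ hχ => if_pos hχ

open Classical in
lemma finsum_mem_trivialOn_apply [Finite G] (H : AddSubgroup G) (x : G) :
    ∑ᶠ χ ∈ {χ : AddChar G ℂ | ∀ a ∈ H, χ a = 1}, χ x = if x ∈ H then (H.index : ℂ) else 0 := by
  have : Fintype (G ⧸ H) := Fintype.ofFinite _
  let pull : AddChar (G ⧸ H) ℂ → AddChar G ℂ :=
    fun ψ => ψ.compAddMonoidHom (QuotientAddGroup.mk' H)
  have hrange : Set.range pull = {χ : AddChar G ℂ | ∀ a ∈ H, χ a = 1} := by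
    ext χ
    refine ⟨?_, fun hχ => ?_⟩
    · rintro ⟨ψ, rfl⟩ a ha
      simp [pull, (QuotientAddGroup.eq_zero_iff a).2 ha]
    · refine ⟨toAddMonoidHomEquiv.symm
        (QuotientAddGroup.lift H (toAddMonoidHomEquiv χ) fun a ha => ?_), ?_⟩
      · simp [hχ a ha]
      · ext a; simp [pull]
  rw [← hrange, finsum_mem_range
    (compAddMonoidHom_injective_left _ (QuotientAddGroup.mk'_surjective H)),
    finsum_eq_sum_of_fintype]
  simp only [compAddMonoidHom_apply, QuotientAddGroup.mk'_apply, sum_apply_eq_ite,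
    QuotientAddGroup.eq_zero_iff, AddSubgroup.index_eq_card, Nat.card_eq_fintype_card]

end AddChar

lemma Ideal.natCard_quotient_pow_of_prime {S : Type*} [CommRing S] [IsDedekindDomain S]
    {P : Ideal S} [P.IsPrime] (hP : P ≠ ⊥) (m : ℕ) :
    Nat.card (S ⧸ P ^ m) = Nat.card (S ⧸ P) ^ m := by
  simpa only [Submodule.cardQuot_apply] using cardQuot_pow_of_prime hP (i := m)

section Residue

variable {O : Type} [CommRing O]

lemma pow_notMem_span_singleton_pow_succ [IsDomain O] {π : O} (hπ : Irreducible π) (r : ℕ) :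
    π ^ r ∉ Ideal.span {π} ^ (r + 1) := by
  rw [Ideal.span_singleton_pow, Ideal.mem_span_singleton,
    pow_dvd_pow_iff hπ.ne_zero hπ.not_isUnit]
  omega

variable (π : O) {ℓ : ℕ}

lemma mk_mem_idealImage_iff {s : ℕ} (hs : s ≤ ℓ) (y : O) :
    Ideal.Quotient.mk (Ideal.span {π} ^ ℓ) y ∈ idealImage O π ℓ s ↔ y ∈ Ideal.span {π} ^ s :=
  Ideal.mem_quotient_iff_mem (Ideal.pow_le_pow_right hs)

lemma index_idealImage {s : ℕ} (hs : s ≤ ℓ) :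
    (idealImage O π ℓ s).toAddSubgroup.index = Nat.card (O ⧸ Ideal.span {π} ^ s) := by
  rw [AddSubgroup.index_eq_card]
  exact Nat.card_congr (DoubleQuot.quotQuotEquivQuotOfLE (Ideal.pow_le_pow_right hs)).toEquiv

lemma idealImage_succ_le (r : ℕ) : idealImage O π ℓ (r + 1) ≤ idealImage O π ℓ r :=
  Ideal.map_mono (Ideal.pow_le_pow_right r.le_succ)

lemma dualLevel_eq_sdiff (r : ℕ) :
    dualLevel O π ℓ r =
      {χ | ∀ a ∈ (idealImage O π ℓ (r + 1)).toAddSubgroup, χ a = 1} \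
        {χ | ∀ a ∈ (idealImage O π ℓ r).toAddSubgroup, χ a = 1} := by
  ext χ
  simp [dualLevel]

open Classical in
lemma finsum_mem_dualLevel_apply [Finite (O ⧸ Ideal.span {π} ^ ℓ)] (r : ℕ)
    (x : O ⧸ Ideal.span {π} ^ ℓ) :
    ∑ᶠ χ ∈ dualLevel O π ℓ r, χ x =
      (if x ∈ idealImage O π ℓ (r + 1) then ((idealImage O π ℓ (r + 1)).toAddSubgroup.index : ℂ)
        else 0) -
      if x ∈ idealImage O π ℓ r then ((idealImage O π ℓ r).toAddSubgroup.index : ℂ) else 0 := by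
  have hsub : {χ : AddChar _ ℂ | ∀ a ∈ (idealImage O π ℓ r).toAddSubgroup, χ a = 1} ⊆
      {χ | ∀ a ∈ (idealImage O π ℓ (r + 1)).toAddSubgroup, χ a = 1} :=
    fun χ hχ a ha => hχ a (idealImage_succ_le π r ha)
  have hsplit := finsum_mem_add_sdiff hsub (Set.toFinite _) (f := fun χ => χ x)
  rw [AddChar.finsum_mem_trivialOn_apply, AddChar.finsum_mem_trivialOn_apply] at hsplit
  rw [dualLevel_eq_sdiff]
  exact eq_sub_of_add_eq' hsplit

lemma sum_phiOne_add_mul_conj [Fintype (O ⧸ Ideal.span {π} ^ ℓ)] {q : ℕ} (hq : 1 ≤ q) (r : ℕ)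
    (x : O ⧸ Ideal.span {π} ^ ℓ) :
    ∑ a, phiOne O π q ℓ r (x + a) * conj (phiOne O π q ℓ r a) =
      Fintype.card (O ⧸ Ideal.span {π} ^ ℓ) / ((q : ℂ) ^ r * ((q : ℂ) - 1)) *
        ∑ᶠ χ ∈ dualLevel O π ℓ r, χ x := by
  set c : ℂ := 1 / (Real.sqrt ((q : ℝ) ^ r * ((q : ℝ) - 1)) : ℂ)
  have hc : c * conj c = 1 / ((q : ℂ) ^ r * ((q : ℂ) - 1)) := by
    have hI : (0 : ℝ) ≤ (q : ℝ) ^ r * ((q : ℝ) - 1) := by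
      have : (1 : ℝ) ≤ q := by exact_mod_cast hq
      positivity
    simp only [c, map_div₀, map_one, Complex.conj_ofReal, div_mul_div_comm, one_mul,
      ← Complex.ofReal_mul, Real.mul_self_sqrt hI]
    push_cast
    rfl
  calc ∑ a, phiOne O π q ℓ r (x + a) * conj (phiOne O π q ℓ r a)
      = c * conj c * ∑ a, (∑ᶠ χ ∈ dualLevel O π ℓ r, χ (x + a)) *
          conj (∑ᶠ χ ∈ dualLevel O π ℓ r, χ a) := by
        rw [Finset.mul_sum]
        refine Finset.sum_congr rfl fun a _ => ?_
        rw [phiOne, phiOne, map_mul]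
        ring
    _ = _ := by
        rw [AddChar.sum_finsum_mem_apply_add_mul_conj, hc]
        ring

end Residue

/-- `⟨φ_r^{(1)}(π^r + ·), φ_r^{(1)}⟩ = -1/(q-1)`. -/
theorem stmt_11 (O : Type) [CommRing O] [IsDomain O] [IsDiscreteValuationRing O]
    (π : O) (hπ : Irreducible π) (q ℓ : ℕ)
    [Finite (O ⧸ Ideal.span {π})] (hq : Nat.card (O ⧸ Ideal.span {π}) = q)
    (r : ℕ) (hr : r ≤ ℓ - 1) (hℓ : 1 ≤ ℓ) :
    (1 / (Nat.card (O ⧸ (Ideal.span {π} ^ ℓ)) : ℂ)) *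
        ∑ᶠ a : O ⧸ (Ideal.span {π} ^ ℓ),
          phiOne O π q ℓ r (Ideal.Quotient.mk (Ideal.span {π} ^ ℓ) (π ^ r) + a) *
            conj (phiOne O π q ℓ r a) =
      -1 / ((q : ℂ) - 1) := by
  have hq_pos : 0 < q := hq ▸ Nat.card_pos
  have : (Ideal.span {π}).IsPrime := (Ideal.span_singleton_prime hπ.ne_zero).2 hπ.prime
  have hcard (m : ℕ) : Nat.card (O ⧸ Ideal.span {π} ^ m) = q ^ m :=
    hq ▸ Ideal.natCard_quotient_pow_of_prime (by simpa using hπ.ne_zero) m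
  have : Finite (O ⧸ Ideal.span {π} ^ ℓ) := Nat.finite_of_card_ne_zero (by simp [hcard]; omega)
  have := Fintype.ofFinite (O ⧸ Ideal.span {π} ^ ℓ)
  have hsum : ∑ᶠ χ ∈ dualLevel O π ℓ r, χ (Ideal.Quotient.mk _ (π ^ r)) = -(q : ℂ) ^ r := by
    rw [finsum_mem_dualLevel_apply,
      if_neg ((mk_mem_idealImage_iff π (by omega) _).not.2
        (pow_notMem_span_singleton_pow_succ hπ r)),
      if_pos ((mk_mem_idealImage_iff π (by omega) _).2
        (Ideal.pow_mem_pow (Ideal.mem_span_singleton_self π) r)),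
      index_idealImage π (by omega), hcard]
    push_cast
    ring
  rw [finsum_eq_sum_of_fintype, sum_phiOne_add_mul_conj π hq_pos r, hsum,
    Nat.card_eq_fintype_card]
  have : (Fintype.card (O ⧸ Ideal.span {π} ^ ℓ) : ℂ) ≠ 0 := by simp
  have : (q : ℂ) ≠ 0 := by exact_mod_cast hq_pos.ne'
  field_simp
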